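/- Let d ≥ c ≥ 2 and let Φ : 𝒞(ℝ^c) → 𝒞(ℝ^d) be a non-trivial lattice homomorphism. Let S ⊆ ℝ^c be a set consisting of exactly c + 2 points. Then there exists a c-dimensional affine subspace H ⊆ ℝ^d such that Φ({x}) ∩ H ≠ ∅ for every x ∈ S. -/

import Mathlib

/-!
If one `Φ {x₀}` were empty, `Φ` would send every segment starting at `x₀` to the image of its
far endpoint; comparing two disjoint segments on a line through `x₀` then makes every `Φ {x}`,
and hence every `Φ C`, empty. So by non-triviality all `Φ {x}` are non-empty.

By Radon's theorem, `S = A ⊔ B` with a point `p ∈ conv A ∩ conv B`. A point `z ∈ Φ {p}` lies in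
`Φ (conv A) = conv (⋃ a ∈ A, Φ {a})`, so `z ∈ conv {y a | a ∈ A}` for some `y a ∈ Φ {a}`, and
likewise `z ∈ conv {y' b | b ∈ B}` with `y' b ∈ Φ {b}`. The two affine spans have dimension at
most `|A| - 1` and `|B| - 1` and share `z`, so all these points lie in an affine subspace of
dimension at most `|A| + |B| - 2 = c`, which enlarges to one of dimension exactly `c ≤ d`.
-/

open Set

noncomputable section

/-- Euclidean space `ℝ^n`. -/
abbrev E (n : ℕ) := EuclideanSpace ℝ (Fin n)

/-- A convex body of `ℝ^n`: a compact convex subset (possibly empty). -/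
def IsBody {n : ℕ} (C : Set (E n)) : Prop := Convex ℝ C ∧ IsCompact C

/-- `Φ` represents a lattice homomorphism from `𝒞(ℝ^c)` to `𝒞(ℝ^d)`: it maps convex bodies
to convex bodies, and on convex bodies it preserves intersections (the lattice meet) and
convex hulls of unions (the lattice join). -/
def IsLatHom {c d : ℕ} (Φ : Set (E c) → Set (E d)) : Prop :=
  (∀ C, IsBody C → IsBody (Φ C)) ∧
  ∀ C D : Set (E c), IsBody C → IsBody D →
    Φ (C ∩ D) = Φ C ∩ Φ D ∧ Φ (convexHull ℝ (C ∪ D)) = convexHull ℝ (Φ C ∪ Φ D)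

/-- `Φ` is non-trivial: it is not constant on convex bodies. -/
def NonTrivial {c d : ℕ} (Φ : Set (E c) → Set (E d)) : Prop :=
  ∃ C D : Set (E c), IsBody C ∧ IsBody D ∧ Φ C ≠ Φ D

/-- The closed ray emanating from `o` in direction `u`. -/
def Ray {n : ℕ} (o u : E n) : Set (E n) := {p | ∃ t : ℝ, 0 ≤ t ∧ p = o + t • u}

/-- An affine hyperplane of `ℝ^n`: a nonempty affine subspace of dimension `n - 1`. -/
def IsHyperplane {n : ℕ} (H : AffineSubspace ℝ (E n)) : Prop :=
  (H : Set (E n)).Nonempty ∧ Module.finrank ℝ H.direction + 1 = n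

open scoped Classical in
/-- The dimension of a convex set: the dimension of its affine hull, with `sdim ∅ = -1`. -/
def sdim {n : ℕ} (s : Set (E n)) : ℤ :=
  if s = ∅ then -1 else Module.finrank ℝ (affineSpan ℝ s).direction


open Module

section ConvexGeometry

variable {𝕜 ι V : Type*} [Field 𝕜] [LinearOrder 𝕜] [IsStrictOrderedRing 𝕜]
  [AddCommGroup V] [Module 𝕜 V]

theorem exists_mem_convexHull_image_of_mem_convexHull_biUnion {T : Finset ι} {K : ι → Set V}
    (hK : ∀ i ∈ T, Convex 𝕜 (K i) ∧ (K i).Nonempty) {z : V}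
    (hz : z ∈ convexHull 𝕜 (⋃ i ∈ T, K i)) :
    ∃ y : ι → V, (∀ i ∈ T, y i ∈ K i) ∧ z ∈ convexHull 𝕜 (y '' T) := by
  classical
  induction T using Finset.induction_on generalizing z with
  | empty => simp at hz
  | insert a T ha ih =>
    rw [Finset.set_biUnion_insert] at hz
    have hKa := (hK a (Finset.mem_insert_self a T)).1
    rcases T.eq_empty_or_nonempty with rfl | ⟨b, hb⟩
    · simp only [Finset.notMem_empty, iUnion_of_empty, iUnion_empty, union_empty,
        hKa.convexHull_eq] at hz
      exact ⟨fun _ => z, by simpa using hz, by simp⟩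
    obtain ⟨u, hu, v, hv, hzuv⟩ : ∃ u ∈ K a, ∃ v ∈ convexHull 𝕜 (⋃ i ∈ T, K i),
        z ∈ segment 𝕜 u v := by
      have hT : (⋃ i ∈ T, K i).Nonempty :=
        ((hK b (Finset.mem_insert_of_mem hb)).2.mono (subset_biUnion_of_mem (u := K) hb))
      rw [convexHull_union (hK a (Finset.mem_insert_self a T)).2 hT, hKa.convexHull_eq] at hz
      exact mem_convexJoin.1 hz
    obtain ⟨y, hyK, hvy⟩ := ih (fun i hi => hK i (Finset.mem_insert_of_mem hi)) hv
    have hya : ∀ i ∈ T, Function.update y a u i = y i := fun i hi =>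
      Function.update_of_ne (ne_of_mem_of_not_mem hi ha) _ _
    refine ⟨Function.update y a u, ?_, ?_⟩
    · simp only [Finset.forall_mem_insert, Function.update_self]
      exact ⟨hu, fun i hi => hya i hi ▸ hyK i hi⟩
    · rw [Finset.coe_insert, image_insert_eq, Function.update_self, image_congr hya]
      refine (convex_convexHull 𝕜 _).segment_subset (subset_convexHull 𝕜 _ (mem_insert u _))
        (convexHull_mono (subset_insert _ _) hvy) hzuv

theorem Finset.exists_subset_convexHull_inter_convexHull_sdiff_nonempty [FiniteDimensional 𝕜 V]
    [DecidableEq V] {S : Finset V} (hS : finrank 𝕜 V + 2 ≤ S.card) :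
    ∃ A ⊆ S, (convexHull 𝕜 (A : Set V) ∩ convexHull 𝕜 (S \ A : Finset V)).Nonempty := by
  have hdep : ¬ AffineIndependent 𝕜 (Subtype.val : S → V) := fun hind => by
    have := hind.card_le_finrank_succ
    have := Submodule.finrank_le (vectorSpan 𝕜 (Set.range (Subtype.val : S → V)))
    rw [Fintype.card_coe] at *
    omega
  obtain ⟨I, hI⟩ := Convex.radon_partition hdep
  classical
  refine ⟨I.toFinset.map (Function.Embedding.subtype _),
    fun _ hx => Finset.property_of_mem_map_subtype _ hx, ?_⟩
  have hA : ((I.toFinset.map (Function.Embedding.subtype _) : Finset V) : Set V) =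
      Subtype.val '' I := by
    simp
  have hB : Subtype.val '' Iᶜ = (S : Set V) \ Subtype.val '' I :=
    image_val_compl (A := (S : Set V)) (D := I)
  rwa [Finset.coe_sdiff, hA, ← hB]

end ConvexGeometry

namespace Submodule

variable {K V : Type*} [DivisionRing K] [AddCommGroup V] [Module K V] [FiniteDimensional K V]

theorem exists_le_finrank_eq (W : Submodule K V) {n : ℕ} (h₁ : finrank K W ≤ n)
    (h₂ : n ≤ finrank K V) : ∃ W' : Submodule K V, W ≤ W' ∧ finrank K W' = n := by
  induction n, h₁ using Nat.le_induction with
  | base => exact ⟨W, le_rfl, rfl⟩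
  | succ n _ ih =>
    obtain ⟨W', hWW', rfl⟩ := ih (Nat.le_of_succ_le h₂)
    have hW' : W' < ⊤ := lt_top_iff_ne_top.2 fun h => by
      rw [h, finrank_top] at h₂
      omega
    obtain ⟨v, -, hv⟩ := SetLike.exists_of_lt hW'
    exact ⟨W' ⊔ span K {v}, hWW'.trans le_sup_left, finrank_sup_span_singleton hv⟩

end Submodule

section AffineDimension

variable {𝕜 V P : Type*}

theorem exists_affineSubspace_superset_finrank_direction_eq [DivisionRing 𝕜] [AddCommGroup V]
    [Module 𝕜 V] [FiniteDimensional 𝕜 V] [AddTorsor V P] {s : Set P} (hs : s.Nonempty) {n : ℕ}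
    (h₁ : finrank 𝕜 (vectorSpan 𝕜 s) ≤ n) (h₂ : n ≤ finrank 𝕜 V) :
    ∃ H : AffineSubspace 𝕜 P, (H : Set P).Nonempty ∧ finrank 𝕜 H.direction = n ∧ s ⊆ H := by
  obtain ⟨p, hp⟩ := hs
  obtain ⟨W, hsW, hW⟩ := (vectorSpan 𝕜 s).exists_le_finrank_eq h₁ h₂
  refine ⟨AffineSubspace.mk' p W, ⟨p, AffineSubspace.self_mem_mk' p W⟩, by
    rwa [AffineSubspace.direction_mk'], fun q hq => ?_⟩
  exact AffineSubspace.mem_mk'.2 (hsW (vsub_mem_vectorSpan 𝕜 hq hp))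

theorem finrank_vectorSpan_finset_add_one_le [DivisionRing 𝕜] [AddCommGroup V] [Module 𝕜 V]
    [AddTorsor V P] {s : Finset P} (hs : s.Nonempty) :
    finrank 𝕜 (vectorSpan 𝕜 (s : Set P)) + 1 ≤ s.card := by
  classical
  have hcard := hs.card_pos
  have := finrank_vectorSpan_image_finset_le 𝕜 id s (n := s.card - 1) (by omega)
  rw [Finset.image_id] at this
  omega

variable [Field 𝕜] [PartialOrder 𝕜] [AddCommGroup V] [Module 𝕜 V]

theorem finrank_vectorSpan_union_add_two_le_of_mem_convexHull {s t : Finset V} {z : V}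
    (hs : z ∈ convexHull 𝕜 (s : Set V)) (ht : z ∈ convexHull 𝕜 (t : Set V)) :
    finrank 𝕜 (vectorSpan 𝕜 (s ∪ t : Set V)) + 2 ≤ s.card + t.card := by
  have hzs := convexHull_subset_affineSpan _ hs
  have hzt := convexHull_subset_affineSpan _ ht
  have hdir : vectorSpan 𝕜 (s ∪ t : Set V) =
      vectorSpan 𝕜 (s : Set V) ⊔ vectorSpan 𝕜 (t : Set V) := by
    rw [← direction_affineSpan, AffineSubspace.span_union, AffineSubspace.direction_sup hzs hzt,
      vsub_self, Submodule.span_zero_singleton, sup_bot_eq, direction_affineSpan,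
      direction_affineSpan]
  have hs' := finrank_vectorSpan_finset_add_one_le (𝕜 := 𝕜)
    (Finset.coe_nonempty.1 (convexHull_nonempty_iff.1 ⟨z, hs⟩))
  have ht' := finrank_vectorSpan_finset_add_one_le (𝕜 := 𝕜)
    (Finset.coe_nonempty.1 (convexHull_nonempty_iff.1 ⟨z, ht⟩))
  have := finiteDimensional_vectorSpan_of_finite 𝕜 s.finite_toSet
  have := finiteDimensional_vectorSpan_of_finite 𝕜 t.finite_toSet
  have := Submodule.finrank_add_le_finrank_add_finrank (vectorSpan 𝕜 (s : Set V))
    (vectorSpan 𝕜 (t : Set V))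
  rw [hdir]
  omega

theorem exists_affineSubspace_finrank_direction_eq_of_mem_convexHull_inter
    [FiniteDimensional 𝕜 V] {s t : Finset V} {z : V} (hs : z ∈ convexHull 𝕜 (s : Set V))
    (ht : z ∈ convexHull 𝕜 (t : Set V)) {n : ℕ} (h₁ : s.card + t.card ≤ n + 2)
    (h₂ : n ≤ finrank 𝕜 V) :
    ∃ H : AffineSubspace 𝕜 V, (H : Set V).Nonempty ∧ finrank 𝕜 H.direction = n ∧
      (s ∪ t : Set V) ⊆ H := by
  have := finrank_vectorSpan_union_add_two_le_of_mem_convexHull hs ht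
  exact exists_affineSubspace_superset_finrank_direction_eq
    ((convexHull_nonempty_iff.1 ⟨z, hs⟩).mono subset_union_left) (by omega) h₂

end AffineDimension

lemma IsBody.singleton {n : ℕ} (x : E n) : IsBody ({x} : Set (E n)) :=
  ⟨convex_singleton x, isCompact_singleton⟩

lemma IsBody.empty {n : ℕ} : IsBody (∅ : Set (E n)) :=
  ⟨convex_empty, isCompact_empty⟩

lemma IsBody.convexHull {n : ℕ} {T : Set (E n)} (hT : T.Finite) : IsBody (convexHull ℝ T) :=
  ⟨convex_convexHull ℝ T, hT.isCompact_convexHull ℝ⟩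

lemma IsBody.inter {n : ℕ} {C D : Set (E n)} (hC : IsBody C) (hD : IsBody D) : IsBody (C ∩ D) :=
  ⟨hC.1.inter hD.1, hC.2.inter_right hD.2.isClosed⟩

lemma IsBody.segment {n : ℕ} (x y : E n) : IsBody (segment ℝ x y) := by
  rw [← convexHull_pair]
  exact IsBody.convexHull ((finite_singleton y).insert x)

namespace IsLatHom

variable {c d : ℕ} {Φ : Set (E c) → Set (E d)}

lemma map_inter (hΦ : IsLatHom Φ) {C D : Set (E c)} (hC : IsBody C) (hD : IsBody D) :
    Φ (C ∩ D) = Φ C ∩ Φ D :=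
  (hΦ.2 C D hC hD).1

lemma mono (hΦ : IsLatHom Φ) {C D : Set (E c)} (hC : IsBody C) (hD : IsBody D) (h : C ⊆ D) :
    Φ C ⊆ Φ D := by
  rw [← inter_eq_left.2 h, hΦ.map_inter hC hD]
  exact inter_subset_right

lemma map_segment (hΦ : IsLatHom Φ) (x y : E c) :
    Φ (segment ℝ x y) = convexHull ℝ (Φ {x} ∪ Φ {y}) := by
  rw [← convexHull_pair, insert_eq, (hΦ.2 {x} {y} (.singleton x) (.singleton y)).2]

lemma map_convexHull_finset (hΦ : IsLatHom Φ) {T : Finset (E c)} (hT : T.Nonempty) :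
    Φ (convexHull ℝ T) = convexHull ℝ (⋃ x ∈ T, Φ {x}) := by
  classical
  induction hT using Finset.Nonempty.cons_induction with
  | singleton a =>
    rw [Finset.coe_singleton, convexHull_singleton, Finset.set_biUnion_singleton,
      (hΦ.1 _ (.singleton a)).1.convexHull_eq]
  | cons a s ha hs ih =>
    rw [Finset.coe_cons, insert_eq, ← convexHull_convexHull_union_right,
      (hΦ.2 {a} _ (.singleton a) (.convexHull s.finite_toSet)).2, ih,
      convexHull_convexHull_union_right, Finset.cons_eq_insert, Finset.set_biUnion_insert]

lemma map_empty_of_map_singleton_eq_empty (hΦ : IsLatHom Φ) {x₀ : E c} (h₀ : Φ {x₀} = ∅) :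
    Φ ∅ = ∅ := by
  simpa [h₀] using hΦ.map_inter IsBody.empty (.singleton x₀)

lemma map_singleton_eq_empty (hΦ : IsLatHom Φ) {x₀ : E c} (h₀ : Φ {x₀} = ∅) (x : E c) :
    Φ {x} = ∅ := by
  rcases eq_or_ne x x₀ with rfl | hne
  · exact h₀
  set f : ℝ →ᵃ[ℝ] E c := AffineMap.lineMap x₀ x
  have hf₀ : f 0 = x₀ := AffineMap.lineMap_apply_zero x₀ x
  have hf₁ : f 1 = x := AffineMap.lineMap_apply_one x₀ x
  have hseg : ∀ a b : ℝ, a ≤ b → segment ℝ (f a) (f b) = f '' Icc a b := fun a b hab => by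
    rw [← image_segment, segment_eq_Icc hab]
  have hfar : ∀ p, Φ (segment ℝ x₀ p) = Φ {p} := fun p => by
    rw [hΦ.map_segment, h₀, empty_union, (hΦ.1 _ (.singleton p)).1.convexHull_eq]
  have hsub : Φ {x} ⊆ Φ (segment ℝ (f (3 / 2)) (f 2)) := calc
    Φ {x} ⊆ Φ (segment ℝ x₀ (f 2)) := by
      refine hΦ.mono (.singleton x) (.segment _ _) (singleton_subset_iff.2 ?_)
      rw [← hf₀, ← hf₁, hseg 0 2 (by norm_num)]
      exact mem_image_of_mem f ⟨zero_le_one, one_le_two⟩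
    _ = Φ {f 2} := hfar _
    _ ⊆ Φ (segment ℝ (f (3 / 2)) (f 2)) :=
      hΦ.mono (.singleton _) (.segment _ _) (singleton_subset_iff.2 (right_mem_segment ..))
  have hdisj : segment ℝ x₀ x ∩ segment ℝ (f (3 / 2)) (f 2) = ∅ := by
    rw [← hf₀, ← hf₁, hseg 0 1 (by norm_num), hseg (3 / 2) 2 (by norm_num),
      ← image_inter (AffineMap.lineMap_injective ℝ hne.symm), Icc_inter_Icc]
    norm_num
  have := hΦ.map_inter (.segment x₀ x) (.segment (f (3 / 2)) (f 2))
  rw [hdisj, hΦ.map_empty_of_map_singleton_eq_empty h₀, hfar, inter_eq_left.2 hsub] at this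
  exact this.symm

lemma map_eq_empty (hΦ : IsLatHom Φ) {x₀ : E c} (h₀ : Φ {x₀} = ∅) {C : Set (E c)}
    (hC : IsBody C) : Φ C = ∅ := by
  classical
  obtain ⟨u, hCu, -⟩ := hC.1.exists_subset_interior_convexHull_finset_of_isCompact hC.2
    (Filter.univ_mem (f := nhdsSet C))
  have hCu' : C ⊆ convexHull ℝ (insert x₀ u : Finset (E c)) :=
    hCu.trans (interior_subset.trans (convexHull_mono (by simp)))
  refine subset_empty_iff.1 (calc
    Φ C ⊆ Φ (convexHull ℝ (insert x₀ u : Finset (E c))) :=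
      hΦ.mono hC (.convexHull (Finset.finite_toSet _)) hCu'
    _ = convexHull ℝ (⋃ x ∈ insert x₀ u, Φ {x}) :=
      hΦ.map_convexHull_finset (Finset.insert_nonempty _ _)
    _ = ∅ := by simp [hΦ.map_singleton_eq_empty h₀])

lemma map_singleton_nonempty (hΦ : IsLatHom Φ) (hnt : NonTrivial Φ) (x : E c) :
    (Φ {x}).Nonempty := by
  rw [nonempty_iff_ne_empty]
  intro h₀
  obtain ⟨C, D, hC, hD, hCD⟩ := hnt
  exact hCD ((hΦ.map_eq_empty h₀ hC).trans (hΦ.map_eq_empty h₀ hD).symm)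

lemma exists_mem_convexHull_image_of_mem_map_convexHull (hΦ : IsLatHom Φ) (hnt : NonTrivial Φ)
    {A : Finset (E c)} (hA : A.Nonempty) {z : E d} (hz : z ∈ Φ (convexHull ℝ A)) :
    ∃ y : E c → E d, (∀ x ∈ A, y x ∈ Φ {x}) ∧ z ∈ convexHull ℝ (A.image y : Set (E d)) := by
  rw [hΦ.map_convexHull_finset hA] at hz
  simp only [Finset.coe_image]
  exact exists_mem_convexHull_image_of_mem_convexHull_biUnion
    (fun x _ => ⟨(hΦ.1 _ (.singleton x)).1, hΦ.map_singleton_nonempty hnt x⟩) hz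

end IsLatHom

theorem stmt_12_general (c d : ℕ) (hcd : c ≤ d) (Φ : Set (E c) → Set (E d))
    (hΦ : IsLatHom Φ) (hnt : NonTrivial Φ)
    (S : Set (E c)) (hS : S.Finite) (hcard : S.ncard = c + 2) :
    ∃ H : AffineSubspace ℝ (E d), (H : Set (E d)).Nonempty ∧
      Module.finrank ℝ H.direction = c ∧
      ∀ x ∈ S, (Φ {x} ∩ (H : Set (E d))).Nonempty := by
  classical
  set T := hS.toFinset
  obtain ⟨A, hAT, p, hpA, hpB⟩ := T.exists_subset_convexHull_inter_convexHull_sdiff_nonempty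
    (𝕜 := ℝ) (by rw [finrank_euclideanSpace_fin, ← Set.ncard_eq_toFinset_card S hS, hcard])
  set B := T \ A
  have hbodyA := IsBody.convexHull A.finite_toSet
  have hbodyB := IsBody.convexHull B.finite_toSet
  obtain ⟨z, hzA, hzB⟩ : (Φ (convexHull ℝ A) ∩ Φ (convexHull ℝ B)).Nonempty := by
    rw [← hΦ.map_inter hbodyA hbodyB]
    exact (hΦ.map_singleton_nonempty hnt p).mono <|
      hΦ.mono (.singleton p) (hbodyA.inter hbodyB) (singleton_subset_iff.2 ⟨hpA, hpB⟩)
  obtain ⟨yA, hyA, hzyA⟩ := hΦ.exists_mem_convexHull_image_of_mem_map_convexHull hnt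
    (convexHull_nonempty_iff.1 ⟨p, hpA⟩) hzA
  obtain ⟨yB, hyB, hzyB⟩ := hΦ.exists_mem_convexHull_image_of_mem_map_convexHull hnt
    (convexHull_nonempty_iff.1 ⟨p, hpB⟩) hzB
  have hcardAB : (A.image yA).card + (B.image yB).card ≤ c + 2 := calc
    _ ≤ A.card + B.card := add_le_add Finset.card_image_le Finset.card_image_le
    _ = c + 2 := by
      rw [add_comm, Finset.card_sdiff_add_card_eq_card hAT, ← hcard,
        Set.ncard_eq_toFinset_card S hS]
  obtain ⟨H, hH, hHc, hyH⟩ := exists_affineSubspace_finrank_direction_eq_of_mem_convexHull_inter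
    hzyA hzyB hcardAB (by rwa [finrank_euclideanSpace_fin])
  refine ⟨H, hH, hHc, fun x hx => ?_⟩
  by_cases hxA : x ∈ A
  · exact ⟨yA x, hyA x hxA, hyH (Or.inl (Finset.mem_image_of_mem yA hxA))⟩
  · have hxB : x ∈ B := Finset.mem_sdiff.2 ⟨hS.mem_toFinset.2 hx, hxA⟩
    exact ⟨yB x, hyB x hxB, hyH (Or.inr (Finset.mem_image_of_mem yB hxB))⟩

/-- Preservation of affine dependence: for a non-trivial lattice homomorphism
`𝒞(ℝ^c) → 𝒞(ℝ^d)`, `d ≥ c ≥ 2`, and any `(c+2)`-point set `S` there is a `c`-dimensional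
affine subspace of `ℝ^d` meeting every `Φ({x})`, `x ∈ S`. -/
theorem stmt_12 (c d : ℕ) (hc : 2 ≤ c) (hcd : c ≤ d) (Φ : Set (E c) → Set (E d))
    (hΦ : IsLatHom Φ) (hnt : NonTrivial Φ)
    (S : Set (E c)) (hS : S.Finite) (hcard : S.ncard = c + 2) :
    ∃ H : AffineSubspace ℝ (E d), (H : Set (E d)).Nonempty ∧
      Module.finrank ℝ H.direction = c ∧
      ∀ x ∈ S, (Φ {x} ∩ (H : Set (E d))).Nonempty :=
  stmt_12_general c d hcd Φ hΦ hnt S hS hcard
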